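/- Let k be any field and consider the polynomial ring k[x,y,u,v,f,g,p,q] graded so that x, y, u, v have degree 1 and f, g, p, q have degree 2. There do not exist weighted-homogeneous polynomials g_1, g_2, g_3, h_1, h_2, h_3 of degree 2 in this ring such that x²f + y²g + u²p + v²q = g_1h_1 + g_2h_2 + g_3h_3. -/

import Mathlib

/-- The weights on the polynomial ring `k[x,y,u,v,f,g,p,q]`: the first four variables
`x, y, u, v` have degree 1 and the last four variables `f, g, p, q` have degree 2. -/
def strengthWeight : Fin 8 → ℕ := fun i => if (i : ℕ) < 4 then 1 else 2

/-!
Differentiating `∑ⱼ xⱼ² zⱼ = ∑ᵢ gᵢhᵢ` with respect to the degree-2 variable `zⱼ` gives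
`xⱼ² = ∑ᵢ (aⱼᵢ hᵢ + bⱼᵢ gᵢ)`, where `aⱼᵢ = ∂gᵢ/∂zⱼ` and `bⱼᵢ = ∂hᵢ/∂zⱼ` are constants by
degree reasons. Differentiating once more, by `zⱼ'`, shows that the four vectors
`(aⱼ, bⱼ) ∈ k³ × k³` are pairwise orthogonal, themselves included, for the nondegenerate
hyperbolic form `⟨(a, b), (a', b')⟩ = a ⬝ b' + a' ⬝ b` on `k⁶`. A totally isotropic subspace of
`k⁶` has dimension at most 3, so these vectors satisfy a nontrivial relation `c`. The derivation
`∑ⱼ cⱼ ∂/∂zⱼ` then kills every `gᵢ` and `hᵢ`, hence the right-hand side, while it sends the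
left-hand side to `∑ⱼ cⱼ xⱼ² ≠ 0`.
-/

open MvPolynomial Module

theorem Derivation.finsetSum_apply {R A M ι : Type*} [CommSemiring R] [CommSemiring A]
    [AddCommMonoid M] [Algebra R A] [Module A M] [Module R M] (s : Finset ι)
    (D : ι → Derivation R A M) (a : A) : (∑ i ∈ s, D i) a = ∑ i ∈ s, D i a :=
  (congrFun (map_sum Derivation.coeFnAddMonoidHom D s) a).trans (Finset.sum_apply a s _)

namespace LinearMap.BilinForm

variable {K V : Type*} [Field K] [AddCommGroup V] [Module K V] {B : LinearMap.BilinForm K V}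

theorem span_le_orthogonal_span {s : Set V}
    (hs : ∀ x ∈ s, ∀ y ∈ s, B x y = 0) :
    Submodule.span K s ≤ B.orthogonal (Submodule.span K s) :=
  Submodule.span_le.mpr fun y hy => mem_orthogonal_iff.mpr fun _ hn =>
    (Submodule.span_le (p := LinearMap.ker (B.flip y))).mpr (fun x hx => hs x hx y hy) hn

theorem two_mul_finrank_le_of_le_orthogonal [FiniteDimensional K V] (hB : B.Nondegenerate)
    {W : Submodule K V} (hW : W ≤ B.orthogonal W) :
    2 * finrank K W ≤ finrank K V := by
  have := Submodule.finrank_mono hW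
  rw [finrank_orthogonal hB] at this
  have := Submodule.finrank_le W
  omega

end LinearMap.BilinForm

theorem LinearMap.nondegenerate_dualProd (K V : Type*) [Field K] [AddCommGroup V]
    [Module K V] : (dualProd K V).Nondegenerate :=
  (isSymm_dualProd K V).isRefl.nondegenerate_iff_separatingLeft.mpr
    ((separatingLeft_dualProd K V).mpr (Module.eval_apply_injective K))

open Matrix in
theorem Matrix.exists_ne_zero_vecMul_eq_zero_of_dotProduct_add_dotProduct_eq_zero
    {K ι κ : Type*} [Field K] [Fintype ι] [Fintype κ]
    (hcard : Fintype.card κ < Fintype.card ι) {a b : Matrix ι κ K}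
    (hab : ∀ j j', a j ⬝ᵥ b j' + a j' ⬝ᵥ b j = 0) :
    ∃ c : ι → K, c ≠ 0 ∧ c ᵥ* a = 0 ∧ c ᵥ* b = 0 := by
  classical
  let e := dotProductEquiv K κ
  let r : ι → Dual K (κ → K) × (κ → K) := fun j => (e (a j), b j)
  have hr : ¬ LinearIndependent K r := by
    intro hli
    have hW := LinearMap.BilinForm.span_le_orthogonal_span (B := LinearMap.dualProd K (κ → K))
      (s := Set.range r) (by rintro _ ⟨j, rfl⟩ _ ⟨j', rfl⟩; simpa [r, e, add_comm] using hab j j')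
    have := LinearMap.BilinForm.two_mul_finrank_le_of_le_orthogonal
      (LinearMap.nondegenerate_dualProd K _) hW
    rw [finrank_span_eq_card hli, finrank_prod, Subspace.dual_finrank_eq,
      finrank_fintype_fun_eq_card] at this
    omega
  obtain ⟨c, hc, j, hj⟩ := Fintype.not_linearIndependent_iff.mp hr
  refine ⟨c, fun h => hj (congrFun h j), ?_, ?_⟩ <;> rw [vecMul_eq_sum]
  · exact e.injective (by simpa [r, Prod.fst_sum, map_sum] using congrArg Prod.fst hc)
  · simpa [r, Prod.snd_sum] using congrArg Prod.snd hc

namespace MvPolynomial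

variable {σ R M : Type*}

section CommSemiring

variable [CommSemiring R]

theorem IsWeightedHomogeneous.pderiv_eq_C [AddCancelCommMonoid M] [PartialOrder M]
    [CanonicallyOrderedAdd M] [IsAddTorsionFree M] {w : σ → M} (hw : ∀ j, w j ≠ 0)
    {p : MvPolynomial σ R} {i : σ} (hp : p.IsWeightedHomogeneous w (w i)) :
    pderiv i p = C (coeff 0 (pderiv i p)) := by
  have h0 : (pderiv i p).IsWeightedHomogeneous w 0 := hp.pderiv (zero_add _)
  conv_lhs => rw [← h0.weightedHomogeneousComponent_same, weightedHomogeneousComponent_zero _ hw]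

theorem linearIndependent_X_pow {n : ℕ} (hn : n ≠ 0) :
    LinearIndependent R (fun i : σ => (X i ^ n : MvPolynomial σ R)) := by
  simpa [Function.comp_def, X_pow_eq_monomial] using
    (basisMonomials σ R).linearIndependent.comp _ (Finsupp.single_left_injective hn)

theorem pderiv_sum_mul_X {ι : Type*} [Fintype ι] {z : ι → σ} (hz : Function.Injective z)
    {p : ι → MvPolynomial σ R} (hp : ∀ s j, pderiv (z j) (p s) = 0) (j : ι) :
    pderiv (z j) (∑ s, p s * X (z s)) = p j := by
  classical
  simp only [map_sum, Derivation.leibniz, hp, pderiv_X, hz.eq_iff, add_zero, smul_eq_mul,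
    Pi.single_apply, mul_ite, mul_one, mul_zero, Finset.sum_ite_eq', Finset.mem_univ, if_true]

theorem sum_smul_pderiv_apply_eq_C {ι : Type*} [Fintype ι] {z : ι → σ}
    {p : MvPolynomial σ R} {a : ι → R} (ha : ∀ j, pderiv (z j) p = C (a j)) (c : ι → R) :
    (∑ j, c j • pderiv (z j)) p = C (c ⬝ᵥ a) := by
  simp only [Derivation.finsetSum_apply, Derivation.smul_apply, ha, smul_eq_C_mul, ← map_mul,
    ← map_sum, dotProduct]

end CommSemiring

theorem pderiv_pderiv_sum_mul {ι : Type*} [Fintype ι] [CommRing R]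
    {G H : ι → MvPolynomial σ R} {i j : σ} {a b a' b' : ι → R}
    (ha : ∀ s, pderiv i (G s) = C (a s)) (hb : ∀ s, pderiv i (H s) = C (b s))
    (ha' : ∀ s, pderiv j (G s) = C (a' s)) (hb' : ∀ s, pderiv j (H s) = C (b' s)) :
    pderiv j (pderiv i (∑ s, G s * H s)) = C (a ⬝ᵥ b' + a' ⬝ᵥ b) := by
  simp only [map_sum, Derivation.leibniz, smul_eq_mul, map_add, ha, hb, ha', hb', pderiv_C,
    mul_zero, dotProduct, map_mul]
  rw [← Finset.sum_add_distrib]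
  exact Finset.sum_congr rfl fun s _ => by ring

open Matrix in
theorem sum_mul_X_ne_sum_mul {ι κ K : Type*} [Field K] [Fintype ι] [Fintype κ]
    [AddCancelCommMonoid M] [PartialOrder M] [CanonicallyOrderedAdd M] [IsAddTorsionFree M]
    (hcard : Fintype.card κ < Fintype.card ι) {w : σ → M} (hw : ∀ s, w s ≠ 0) {d : M}
    {z : ι → σ} (hz : Function.Injective z) (hzd : ∀ j, w (z j) = d)
    {p : ι → MvPolynomial σ K} (hp : LinearIndependent K p)
    (hpz : ∀ s j, pderiv (z j) (p s) = 0)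
    {G H : κ → MvPolynomial σ K} (hG : ∀ i, (G i).IsWeightedHomogeneous w d)
    (hH : ∀ i, (H i).IsWeightedHomogeneous w d) :
    ∑ j, p j * X (z j) ≠ ∑ i, G i * H i := by
  intro heq
  let a : Matrix ι κ K := fun j i => coeff 0 (pderiv (z j) (G i))
  let b : Matrix ι κ K := fun j i => coeff 0 (pderiv (z j) (H i))
  have ha : ∀ j i, pderiv (z j) (G i) = C (a j i) := fun j i =>
    IsWeightedHomogeneous.pderiv_eq_C hw (hzd j ▸ hG i)
  have hb : ∀ j i, pderiv (z j) (H i) = C (b j i) := fun j i =>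
    IsWeightedHomogeneous.pderiv_eq_C hw (hzd j ▸ hH i)
  have hdz : ∀ j, p j = pderiv (z j) (∑ i, G i * H i) := fun j => by
    rw [← heq, pderiv_sum_mul_X hz hpz]
  have hab : ∀ j j', a j ⬝ᵥ b j' + a j' ⬝ᵥ b j = 0 := fun j j' => C_injective σ K <| by
    rw [← pderiv_pderiv_sum_mul (ha j) (hb j) (ha j') (hb j'), ← hdz, hpz, map_zero]
  obtain ⟨c, hc, hca, hcb⟩ :=
    exists_ne_zero_vecMul_eq_zero_of_dotProduct_add_dotProduct_eq_zero hcard hab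
  let D : Derivation K (MvPolynomial σ K) (MvPolynomial σ K) := ∑ j, c j • pderiv (z j)
  have hDG : ∀ i, D (G i) = 0 := fun i => by
    rw [sum_smul_pderiv_apply_eq_C (ha · i) c, ← map_zero C]
    exact congrArg C (congrFun hca i)
  have hDH : ∀ i, D (H i) = 0 := fun i => by
    rw [sum_smul_pderiv_apply_eq_C (hb · i) c, ← map_zero C]
    exact congrArg C (congrFun hcb i)
  have hcp : ∑ j, c j • p j = 0 := calc
    ∑ j, c j • p j = D (∑ i, G i * H i) := by
      simp only [D, Derivation.finsetSum_apply, Derivation.smul_apply, hdz]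
    _ = 0 := by
      simp only [map_sum, Derivation.leibniz, hDG, hDH, smul_zero, add_zero,
        Finset.sum_const_zero]
  exact hc (_root_.funext (Fintype.linearIndependent_iff.mp hp c hcp))

end MvPolynomial

theorem Fin.castAdd_ne_natAdd {m n : ℕ} (i : Fin m) (j : Fin n) :
    Fin.castAdd n i ≠ Fin.natAdd m j :=
  Fin.ne_of_val_ne (by simp only [Fin.val_castAdd, Fin.val_natAdd]; omega)

theorem strengthWeight_ne_zero (i : Fin 8) : strengthWeight i ≠ 0 := by
  unfold strengthWeight; split <;> simp

theorem strengthWeight_natAdd (j : Fin 4) : strengthWeight (Fin.natAdd 4 j) = 2 := by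
  simp [strengthWeight]

open MvPolynomial in
/-- In `k[x,y,u,v,f,g,p,q]` with `deg x = deg y = deg u = deg v = 1` and
`deg f = deg g = deg p = deg q = 2`, there are no weighted-homogeneous polynomials
`g₁, g₂, g₃, h₁, h₂, h₃` of degree 2 with
`x²f + y²g + u²p + v²q = g₁h₁ + g₂h₂ + g₃h₃`. -/
theorem case_d (k : Type*) [Field k] :
    ¬ ∃ g1 g2 g3 h1 h2 h3 : MvPolynomial (Fin 8) k,
      g1.IsWeightedHomogeneous strengthWeight 2 ∧
      g2.IsWeightedHomogeneous strengthWeight 2 ∧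
      g3.IsWeightedHomogeneous strengthWeight 2 ∧
      h1.IsWeightedHomogeneous strengthWeight 2 ∧
      h2.IsWeightedHomogeneous strengthWeight 2 ∧
      h3.IsWeightedHomogeneous strengthWeight 2 ∧
      (X 0 ^ 2 * X 4 + X 1 ^ 2 * X 5 + X 2 ^ 2 * X 6 + X 3 ^ 2 * X 7 :
          MvPolynomial (Fin 8) k) = g1 * h1 + g2 * h2 + g3 * h3 := by
  rintro ⟨g1, g2, g3, h1, h2, h3, hg1, hg2, hg3, hh1, hh2, hh3, heq⟩
  have hpz : ∀ s j : Fin 4,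
      pderiv (Fin.natAdd 4 j) (X (Fin.castAdd 4 s) ^ 2 : MvPolynomial (Fin 8) k) = 0 :=
    fun s j => by
      rw [Derivation.leibniz_pow, pderiv_X, Pi.single_eq_of_ne (Fin.castAdd_ne_natAdd s j),
        smul_zero, smul_zero]
  refine sum_mul_X_ne_sum_mul (by simp) strengthWeight_ne_zero (Fin.natAdd_injective 4 4)
    strengthWeight_natAdd
    ((linearIndependent_X_pow two_ne_zero).comp _ (Fin.castAdd_injective 4 4)) hpz
    (G := ![g1, g2, g3]) (H := ![h1, h2, h3]) (fun i => by fin_cases i <;> assumption)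
    (fun i => by fin_cases i <;> assumption) ?_
  simpa [Fin.sum_univ_four, Fin.sum_univ_three] using heq
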